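/- Define Λ_k(A) ∈ Q_n inductively by Λ_0(A) = 1, Λ_k(∅) = 0 for k ≥ 1, and Λ_k(A∪{i}) = Λ_k(A) + (Λ_1(A∪{i}) - Λ_1(A))·Λ_{k-1}(A) for i ∉ A. Then Λ_k(A) is well-defined (independent of the order in which elements of A are added), and for any σ in the symmetric group S_n with σ(A) = A, σ(Λ_k(A)) = Λ_k(A). -/

import Mathlib

/- Since `r(A ∪ {a}) - r(A) = z_{A,a}`, each step of the recursion is
`Λ_m ↦ Λ_m + z_{A,a}·Λ_{m-1}`. Reordering a list of distinct indices is a product of adjacent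
transpositions. For `r` each of them is an instance of the additive relation; for `Λ_m`, two
consecutive steps adding `b` then `a` contribute
`(z_{A∪b,a} + z_{A,b})·Λ_{m-1}(A) + z_{A∪b,a} z_{A,b}·Λ_{m-2}(A)`, which is symmetric in `a, b`
by the two relations. A ring map acting on the generators as `σ` sends `Λ_m` built along a list
to `Λ_m` built along its image, that is to `Λ_m(σ(A))`. -/

namespace QnPaper

/-- The defining relations of the quadratic algebra `Q_n`:
for `A ⊆ {1,…,n}` and distinct `i, j ∉ A`,
`z_{A∪{i},j} + z_{A,i} = z_{A∪{j},i} + z_{A,j}` and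
`z_{A∪{i},j} * z_{A,i} = z_{A∪{j},i} * z_{A,j}`. -/
inductive QRel (k : Type) [Field k] (n : ℕ) :
    FreeAlgebra k (Finset (Fin n) × Fin n) → FreeAlgebra k (Finset (Fin n) × Fin n) → Prop
  | add_rel (A : Finset (Fin n)) (i j : Fin n) (hi : i ∉ A) (hj : j ∉ A) (hij : i ≠ j) :
      QRel k n (FreeAlgebra.ι k (insert i A, j) + FreeAlgebra.ι k (A, i))
        (FreeAlgebra.ι k (insert j A, i) + FreeAlgebra.ι k (A, j))
  | mul_rel (A : Finset (Fin n)) (i j : Fin n) (hi : i ∉ A) (hj : j ∉ A) (hij : i ≠ j) :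
      QRel k n (FreeAlgebra.ι k (insert i A, j) * FreeAlgebra.ι k (A, i))
        (FreeAlgebra.ι k (insert j A, i) * FreeAlgebra.ι k (A, j))

/-- The quadratic algebra `Q_n`. -/
abbrev Q (k : Type) [Field k] (n : ℕ) := RingQuot (QRel k n)

/-- The generator `z_{A,i}` of `Q_n` (only meaningful when `i ∉ A`). -/
def z (k : Type) [Field k] (n : ℕ) (A : Finset (Fin n)) (i : Fin n) : Q k n :=
  RingQuot.mkAlgHom k (QRel k n) (FreeAlgebra.ι k (A, i))

/-- `rAux s [i₁,…,i_r] = z_{s,i₁} + z_{s∪{i₁},i₂} + ⋯`. -/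
def rAux (k : Type) [Field k] (n : ℕ) (s : Finset (Fin n)) : List (Fin n) → Q k n
  | [] => 0
  | a :: l => z k n s a + rAux k n (insert a s) l

/-- `r(A) = z_{A,∅}`, computed using the increasing ordering of `A`. -/
def rFin (k : Type) [Field k] (n : ℕ) (A : Finset (Fin n)) : Q k n :=
  rAux k n ∅ (A.sort (· ≤ ·))

/-- `u(B) = z_{∅,B} = ∑_{D ⊆ B} (-1)^{|B|-|D|} r(D)`. -/
def uFin (k : Type) [Field k] (n : ℕ) (B : Finset (Fin n)) : Q k n :=
  ∑ D ∈ B.powerset, (-1 : Q k n) ^ (B.card - D.card) * rFin k n D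
/-- `Λ_m` built along a list: `Λ_0 = 1`, `Λ_m(∅) = 0` for `m ≥ 1`, and
`Λ_m(A∪{a}) = Λ_m(A) + (Λ_1(A∪{a}) - Λ_1(A))·Λ_{m-1}(A)`, where `Λ_1 = r`. -/
def LamL (k : Type) [Field k] (n : ℕ) : ℕ → List (Fin n) → Q k n
  | 0, _ => 1
  | _ + 1, [] => 0
  | m + 1, a :: l =>
      LamL k n (m + 1) l
        + (rFin k n (insert a l.toFinset) - rFin k n l.toFinset) * LamL k n m l

/-- `Λ_m(A)`, computed by adding the elements of `A` in increasing order. -/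
def Lam (k : Type) [Field k] (n : ℕ) (m : ℕ) (A : Finset (Fin n)) : Q k n :=
  LamL k n m (A.sort (· ≤ ·))

end QnPaper

lemma add_mul_add_mul_add_eq {R : Type*} [Ring R] (L L' L'' xa xb ya yb : R)
    (hadd : ya + xb = yb + xa) (hmul : ya * xb = yb * xa) :
    (L + xb * L') + ya * (L' + xb * L'') = (L + xa * L') + yb * (L' + xa * L'') :=
  calc (L + xb * L') + ya * (L' + xb * L'')
      = L + ((ya + xb) * L' + (ya * xb) * L'') := by noncomm_ring
    _ = L + ((yb + xa) * L' + (yb * xa) * L'') := by rw [hadd, hmul]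
    _ = (L + xa * L') + yb * (L' + xa * L'') := by noncomm_ring

theorem List.toFinset_map {α β : Type*} [DecidableEq α] [DecidableEq β] (f : α → β)
    (l : List α) : (l.map f).toFinset = l.toFinset.image f := by
  ext
  simp

theorem forall_notMem_insert {α : Type*} [DecidableEq α] {a : α} {l : List α}
    {s : Finset α} (hl : (a :: l).Nodup) (hs : ∀ x ∈ a :: l, x ∉ s) :
    ∀ x ∈ l, x ∉ insert a s := by
  intro x hx
  rw [Finset.mem_insert, not_or]
  exact ⟨fun e => (List.nodup_cons.mp hl).1 (e ▸ hx), hs x (List.mem_cons_of_mem a hx)⟩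

namespace QnPaper

variable {k : Type} [Field k] {n : ℕ}

lemma z_insert_add_z (A : Finset (Fin n)) (i j : Fin n) (hi : i ∉ A) (hj : j ∉ A) (hij : i ≠ j) :
    z k n (insert i A) j + z k n A i = z k n (insert j A) i + z k n A j := by
  simpa only [z, map_add] using RingQuot.mkAlgHom_rel k (QRel.add_rel A i j hi hj hij)

lemma z_insert_mul_z (A : Finset (Fin n)) (i j : Fin n) (hi : i ∉ A) (hj : j ∉ A) (hij : i ≠ j) :
    z k n (insert i A) j * z k n A i = z k n (insert j A) i * z k n A j := by
  simpa only [z, map_mul] using RingQuot.mkAlgHom_rel k (QRel.mul_rel A i j hi hj hij)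

lemma rAux_append (i : Fin n) (l : List (Fin n)) (s : Finset (Fin n)) :
    rAux k n s (l ++ [i]) = rAux k n s l + z k n (s ∪ l.toFinset) i := by
  induction l generalizing s with
  | nil => simp [rAux]
  | cons a l ih =>
    rw [List.cons_append, rAux, rAux, ih, add_assoc, List.toFinset_cons, Finset.insert_union,
      Finset.union_insert]

lemma rAux_perm {l₁ l₂ : List (Fin n)} (h : l₁.Perm l₂) (s : Finset (Fin n)) (hl₁ : l₁.Nodup)
    (hs : ∀ x ∈ l₁, x ∉ s) : rAux k n s l₁ = rAux k n s l₂ := by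
  induction h generalizing s with
  | nil => rfl
  | cons a _ ih =>
    rw [rAux, rAux, ih (insert a s) hl₁.of_cons (forall_notMem_insert hl₁ hs)]
  | swap a b l =>
    have hab : b ≠ a := by rintro rfl; simp at hl₁
    simp only [rAux, Finset.insert_comm a b s, ← add_assoc]
    rw [add_comm (z k n s b), z_insert_add_z s b a (hs b (by simp)) (hs a (by simp)) hab,
      add_comm (z k n s a)]
  | trans h₁₂ _ ih₁₂ ih₂₃ =>
    rw [ih₁₂ s hl₁ hs, ih₂₃ s (h₁₂.nodup_iff.mp hl₁) fun x hx => hs x (h₁₂.mem_iff.mpr hx)]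

lemma rAux_empty_eq_rFin {l : List (Fin n)} (hl : l.Nodup) :
    rAux k n ∅ l = rFin k n l.toFinset :=
  rAux_perm (List.perm_of_nodup_nodup_toFinset_eq hl (Finset.sort_nodup _ _) (by simp)) ∅ hl
    (by simp)

lemma rFin_insert {A : Finset (Fin n)} {i : Fin n} (hi : i ∉ A) :
    rFin k n (insert i A) = rFin k n A + z k n A i := by
  have hnodup : (A.sort (· ≤ ·) ++ [i]).Nodup :=
    List.nodup_append.mpr ⟨Finset.sort_nodup _ _, List.nodup_singleton i,
      fun x hx y hy => by rintro rfl; exact hi (by simpa [List.eq_of_mem_singleton hy] using hx)⟩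
  calc rFin k n (insert i A) = rFin k n (A.sort (· ≤ ·) ++ [i]).toFinset := by
        congr 1; ext; simp
    _ = rAux k n ∅ (A.sort (· ≤ ·) ++ [i]) := (rAux_empty_eq_rFin hnodup).symm
    _ = rFin k n A + z k n A i := by
        rw [rAux_append, Finset.empty_union, Finset.sort_toFinset]; rfl

lemma LamL_succ_cons (m : ℕ) {a : Fin n} {l : List (Fin n)} (ha : a ∉ l) :
    LamL k n (m + 1) (a :: l) = LamL k n (m + 1) l + z k n l.toFinset a * LamL k n m l := by
  rw [LamL, rFin_insert (by simpa using ha), add_sub_cancel_left]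

lemma LamL_swap {a b : Fin n} {l : List (Fin n)} (hab : a ≠ b) (ha : a ∉ l) (hb : b ∉ l)
    (m : ℕ) : LamL k n m (a :: b :: l) = LamL k n m (b :: a :: l) := by
  have haL : a ∉ l.toFinset := by simpa using ha
  have hbL : b ∉ l.toFinset := by simpa using hb
  have hadd := z_insert_add_z (k := k) l.toFinset b a hbL haL hab.symm
  have hmul := z_insert_mul_z (k := k) l.toFinset b a hbL haL hab.symm
  have hab' : a ∉ b :: l := by simp [hab, ha]
  have hba' : b ∉ a :: l := by simp [hab.symm, hb]
  rcases m with _ | m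
  · rfl
  simp only [LamL_succ_cons _ hab', LamL_succ_cons _ hba', List.toFinset_cons]
  rcases m with _ | m
  · simp only [LamL_succ_cons 0 ha, LamL_succ_cons 0 hb, LamL.eq_1, mul_one, add_assoc]
    rw [add_comm (z k n l.toFinset b), hadd, add_comm (z k n l.toFinset a)]
  · simp only [LamL_succ_cons _ ha, LamL_succ_cons _ hb]
    exact add_mul_add_mul_add_eq _ _ _ _ _ _ _ hadd hmul

lemma LamL_perm {l₁ l₂ : List (Fin n)} (h : l₁.Perm l₂) (hl₁ : l₁.Nodup) (m : ℕ) :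
    LamL k n m l₁ = LamL k n m l₂ := by
  induction h generalizing m with
  | nil => rfl
  | cons a h ih =>
    rcases m with _ | m
    · rfl
    · simp only [LamL, List.toFinset_eq_of_perm _ _ h, ih hl₁.of_cons]
  | swap a b l =>
    simp only [List.nodup_cons, List.mem_cons, not_or] at hl₁
    exact LamL_swap hl₁.1.1 hl₁.1.2 hl₁.2.1 m
  | trans h₁₂ _ ih₁₂ ih₂₃ => rw [ih₁₂ hl₁, ih₂₃ (h₁₂.nodup_iff.mp hl₁)]

lemma LamL_eq_Lam {l : List (Fin n)} (hl : l.Nodup) (m : ℕ) :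
    LamL k n m l = Lam k n m l.toFinset :=
  LamL_perm (List.perm_of_nodup_nodup_toFinset_eq hl (Finset.sort_nodup _ _) (by simp)) hl m

section Equivariance

variable {F : Type*} [FunLike F (Q k n) (Q k n)] [RingHomClass F (Q k n) (Q k n)]
  (σ : Equiv.Perm (Fin n)) (Φ : F)

def MapsGeneratorsBy : Prop :=
  ∀ (A : Finset (Fin n)) (i : Fin n), i ∉ A → Φ (z k n A i) = z k n (A.image σ) (σ i)

variable {σ Φ} (hΦ : MapsGeneratorsBy σ Φ)
include hΦ

lemma map_rAux {l : List (Fin n)} {s : Finset (Fin n)} (hl : l.Nodup) (hs : ∀ x ∈ l, x ∉ s) :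
    Φ (rAux k n s l) = rAux k n (s.image σ) (l.map σ) := by
  induction l generalizing s with
  | nil => simp [rAux]
  | cons a l ih =>
    rw [rAux, map_add, hΦ s a (hs a (by simp)), ih hl.of_cons (forall_notMem_insert hl hs),
      Finset.image_insert]
    rfl

lemma map_rFin (A : Finset (Fin n)) : Φ (rFin k n A) = rFin k n (A.image σ) := by
  rw [rFin, map_rAux hΦ (Finset.sort_nodup _ _) (by simp), Finset.image_empty,
    rAux_empty_eq_rFin ((A.sort_nodup _).map σ.injective), List.toFinset_map,
    Finset.sort_toFinset]

lemma map_LamL (l : List (Fin n)) (m : ℕ) : Φ (LamL k n m l) = LamL k n m (l.map σ) := by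
  induction l generalizing m with
  | nil => rcases m with _ | m <;> simp [LamL]
  | cons a l ih =>
    rcases m with _ | m
    · simp [LamL]
    · simp only [LamL, map_add, map_mul, map_sub, List.map_cons, List.toFinset_map,
        map_rFin hΦ, ih, Finset.image_insert]

lemma map_Lam (m : ℕ) (A : Finset (Fin n)) : Φ (Lam k n m A) = Lam k n m (A.image σ) := by
  rw [Lam, map_LamL hΦ, LamL_eq_Lam ((A.sort_nodup _).map σ.injective), List.toFinset_map,
    Finset.sort_toFinset]

end Equivariance

/-- `Λ_m(A)` is well defined (independent of the order in which the elements of `A`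
are added), and is invariant under any permutation `σ` stabilizing `A`. -/
theorem stmt11 (k : Type) [Field k] (n : ℕ) :
    (∀ (m : ℕ) (l₁ l₂ : List (Fin n)), l₁.Nodup → l₂.Nodup →
      l₁.toFinset = l₂.toFinset → LamL k n m l₁ = LamL k n m l₂) ∧
    (∀ (σ : Equiv.Perm (Fin n)) (Φ : Q k n →ₐ[k] Q k n),
      (∀ (A : Finset (Fin n)) (i : Fin n), i ∉ A →
        Φ (z k n A i) = z k n (A.image σ) (σ i)) →
      ∀ (m : ℕ) (A : Finset (Fin n)), A.image σ = A → Φ (Lam k n m A) = Lam k n m A) := by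
  refine ⟨fun m l₁ l₂ h₁ h₂ h => ?_, fun σ Φ hΦ m A hA => ?_⟩
  · rw [LamL_eq_Lam h₁, LamL_eq_Lam h₂, h]
  · rw [map_Lam hΦ, hA]
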